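/- arXiv:2406.15902 — 6 statements merged into one kernel-verified Lean document; each statement's English description precedes it below -/
import Mathlib

section
/- The non-commuting graph of a finite non-abelian Lie algebra is connected, with diameter at most 2: for any two non-adjacent vertices x, y there exists a vertex z adjacent to both. -/
/-! The centralizers of two non-central elements `x`, `y` are proper additive subgroups, and a
group is never the union of two proper subgroups; an element outside both centralizers is a
common neighbour of `x` and `y`, and is automatically non-central and distinct from both. -/

def lieCenter (L : Type*) [LieRing L] : Set L := {z : L | ∀ y : L, ⁅z, y⁆ = 0}

section LieRing

variable {L : Type*} [LieRing L]

def lieCentralizer (x : L) : AddSubgroup L :=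
  (AddMonoidHom.mk' (fun y ↦ ⁅x, y⁆) (lie_add x)).ker

@[simp]
lemma mem_lieCentralizer {x y : L} : y ∈ lieCentralizer x ↔ ⁅x, y⁆ = 0 :=
  Iff.rfl

lemma lieCentralizer_eq_top_iff {x : L} : lieCentralizer x = ⊤ ↔ x ∈ lieCenter L := by
  simp only [AddSubgroup.eq_top_iff', mem_lieCentralizer]
  rfl

lemma exists_lie_ne_zero_of_notMem_lieCenter {x y : L} (hx : x ∉ lieCenter L)
    (hy : y ∉ lieCenter L) : ∃ z : L, ⁅x, z⁆ ≠ 0 ∧ ⁅y, z⁆ ≠ 0 := by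
  by_contra! h
  have hcover : ((⊤ : AddSubgroup L) : Set L) ⊆ lieCentralizer x ∪ lieCentralizer y :=
    fun z _ ↦ (em (⁅x, z⁆ = 0)).imp id (h z)
  rcases AddSubgroupClass.subset_union.mp hcover with hxtop | hytop
  · exact hx (lieCentralizer_eq_top_iff.mp (top_le_iff.mp hxtop))
  · exact hy (lieCentralizer_eq_top_iff.mp (top_le_iff.mp hytop))

lemma notMem_lieCenter_of_lie_ne_zero {x z : L} (h : ⁅x, z⁆ ≠ 0) : z ∉ lieCenter L :=
  fun hz ↦ h (by rw [← lie_skew, hz x, neg_zero])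

lemma ne_of_lie_ne_zero {x z : L} (h : ⁅x, z⁆ ≠ 0) : z ≠ x := by
  rintro rfl
  exact h (lie_self z)

end LieRing

theorem stmt_2_general (L : Type*) [LieRing L] :
    ∀ x ∈ (lieCenter L)ᶜ, ∀ y ∈ (lieCenter L)ᶜ, x ≠ y → ⁅x, y⁆ = 0 →
      ∃ z ∈ (lieCenter L)ᶜ, z ≠ x ∧ z ≠ y ∧ ⁅x, z⁆ ≠ 0 ∧ ⁅y, z⁆ ≠ 0 := by
  intro x hx y hy _ _
  obtain ⟨z, hxz, hyz⟩ := exists_lie_ne_zero_of_notMem_lieCenter hx hy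
  exact ⟨z, notMem_lieCenter_of_lie_ne_zero hxz, ne_of_lie_ne_zero hxz, ne_of_lie_ne_zero hyz,
    hxz, hyz⟩

/-- The non-commuting graph of a finite non-abelian Lie algebra is connected
with diameter at most 2: any two distinct non-adjacent vertices have a common
neighbour. -/
theorem stmt_2 (K L : Type*) [Field K] [Fintype K] [LieRing L] [LieAlgebra K L]
    [Fintype L] (hna : ∃ a b : L, ⁅a, b⁆ ≠ 0) :
    ∀ x ∈ (lieCenter L)ᶜ, ∀ y ∈ (lieCenter L)ᶜ, x ≠ y → ⁅x, y⁆ = 0 →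
      ∃ z ∈ (lieCenter L)ᶜ, z ≠ x ∧ z ≠ y ∧ ⁅x, z⁆ ≠ 0 ∧ ⁅y, z⁆ ≠ 0 :=
  stmt_2_general L
end

section
/- If the non-commuting graph of a finite non-abelian Lie algebra L over F_q is complete (every two distinct non-central elements fail to commute), then Z(L) = 0 and q = 2. -/
def HasCompleteNonCommutingGraph (L : Type*) [LieRing L] : Prop :=
  ∀ x ∈ (lieCenter L)ᶜ, ∀ y ∈ (lieCenter L)ᶜ, x ≠ y → ⁅x, y⁆ ≠ 0

section LieRing

variable {L : Type*} [LieRing L]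

theorem zero_mem_lieCenter : (0 : L) ∈ lieCenter L := zero_lie

theorem lie_eq_zero_of_mem_lieCenter (x : L) {z : L} (hz : z ∈ lieCenter L) : ⁅x, z⁆ = 0 := by
  rw [← lie_skew, hz x, neg_zero]

theorem add_mem_lieCenter_iff {x z : L} (hz : z ∈ lieCenter L) :
    x + z ∈ lieCenter L ↔ x ∈ lieCenter L := by
  simp only [lieCenter, Set.mem_ofPred_eq, add_lie, hz _, add_zero]

theorem exists_notMem_lieCenter (hna : ∃ a b : L, ⁅a, b⁆ ≠ 0) : ∃ a : L, a ∉ lieCenter L := by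
  obtain ⟨a, b, hab⟩ := hna
  exact ⟨a, fun ha => hab (ha b)⟩

theorem HasCompleteNonCommutingGraph.eq_of_lie_eq_zero (h : HasCompleteNonCommutingGraph L)
    {x y : L} (hx : x ∉ lieCenter L) (hy : y ∉ lieCenter L) (hxy : ⁅x, y⁆ = 0) : x = y :=
  not_imp_not.mp (h x hx y hy) hxy

theorem HasCompleteNonCommutingGraph.lieCenter_eq_zero (h : HasCompleteNonCommutingGraph L)
    (hna : ∃ a b : L, ⁅a, b⁆ ≠ 0) : lieCenter L = {0} := by
  obtain ⟨a, ha⟩ := exists_notMem_lieCenter hna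
  refine Set.eq_singleton_iff_unique_mem.mpr ⟨zero_mem_lieCenter, fun z hz => ?_⟩
  have hcomm : ⁅a, a + z⁆ = 0 := by
    rw [lie_add, lie_self, lie_eq_zero_of_mem_lieCenter a hz, add_zero]
  have hza : a = a + z := h.eq_of_lie_eq_zero ha (by rwa [add_mem_lieCenter_iff hz]) hcomm
  simpa using hza.symm

end LieRing

section LieAlgebra

variable {K L : Type*} [Field K] [LieRing L] [LieAlgebra K L]

theorem smul_mem_lieCenter_iff {c : K} (hc : c ≠ 0) {x : L} :
    c • x ∈ lieCenter L ↔ x ∈ lieCenter L := by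
  simp only [lieCenter, Set.mem_ofPred_eq, smul_lie, smul_eq_zero, hc, false_or]

theorem HasCompleteNonCommutingGraph.eq_zero_or_eq_one (h : HasCompleteNonCommutingGraph L)
    (hna : ∃ a b : L, ⁅a, b⁆ ≠ 0) (c : K) : c = 0 ∨ c = 1 := by
  obtain ⟨a, ha⟩ := exists_notMem_lieCenter hna
  refine or_iff_not_imp_left.mpr fun hc => ?_
  have hcomm : ⁅a, c • a⁆ = 0 := by rw [lie_smul, lie_self, smul_zero]
  have hca : a = c • a := h.eq_of_lie_eq_zero ha (by rwa [smul_mem_lieCenter_iff hc]) hcomm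
  have ha0 : a ≠ 0 := fun h0 => ha (h0 ▸ zero_mem_lieCenter)
  exact smul_left_injective K ha0 (by simpa using hca.symm)

end LieAlgebra

theorem Fintype.card_eq_two_of_forall_eq_zero_or_eq_one {K : Type*} [MulZeroOneClass K]
    [Nontrivial K] [Fintype K] (h : ∀ c : K, c = 0 ∨ c = 1) : Fintype.card K = 2 := by
  classical
  have huniv : (Finset.univ : Finset K) = {0, 1} := by
    ext c
    simpa using h c
  rw [← Finset.card_univ, huniv, Finset.card_pair zero_ne_one]

theorem stmt_4_general (K L : Type*) [Field K] [Fintype K] [LieRing L] [LieAlgebra K L]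
    (hna : ∃ a b : L, ⁅a, b⁆ ≠ 0)
    (hcomplete : ∀ x ∈ (lieCenter L)ᶜ, ∀ y ∈ (lieCenter L)ᶜ, x ≠ y → ⁅x, y⁆ ≠ 0) :
    lieCenter L = {0} ∧ Fintype.card K = 2 :=
  have h : HasCompleteNonCommutingGraph L := hcomplete
  ⟨h.lieCenter_eq_zero hna,
    Fintype.card_eq_two_of_forall_eq_zero_or_eq_one (h.eq_zero_or_eq_one hna)⟩

/-- If the non-commuting graph of a finite non-abelian Lie algebra `L` over `F_q`
is complete (any two distinct non-central elements fail to commute), then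
`Z(L) = 0` and `q = 2`. -/
theorem stmt_4 (K L : Type*) [Field K] [Fintype K] [LieRing L] [LieAlgebra K L]
    [Fintype L] (hna : ∃ a b : L, ⁅a, b⁆ ≠ 0)
    (hcomplete : ∀ x ∈ (lieCenter L)ᶜ, ∀ y ∈ (lieCenter L)ᶜ, x ≠ y → ⁅x, y⁆ ≠ 0) :
    lieCenter L = {0} ∧ Fintype.card K = 2 :=
  stmt_4_general K L hna hcomplete
end

section
/- Every vertex x of the non-commuting graph of a finite non-abelian Lie algebra satisfies deg(x) > |V|/2, where V is the vertex set; hence (by Dirac's theorem) the graph is Hamiltonian. -/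
/-- The non-commuting graph of a Lie ring `L`: vertices are the non-central
elements (those with `⁅x,y⁆ ≠ 0` for some `y`), and two vertices are adjacent
iff their bracket is nonzero. -/
def ncGraph (L : Type*) [LieRing L] :
    SimpleGraph {x : L // ∃ y : L, ⁅x, y⁆ ≠ 0} where
  Adj a b := ⁅(a : L), (b : L)⁆ ≠ 0
  symm := by
    constructor
    intro a b h hba
    exact h (by rw [← lie_skew, hba, neg_zero])
  loopless := by
    constructor
    intro a h
    exact h (lie_self _)

/-!
The centralizer of a non-central element `v` is a proper additive subgroup of `L`, hence of
index at least `2`, so `v` fails to commute with at least half of `L`; as `0` is central, that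
is more than half of the vertices.

Hamiltonicity is then Dirac's theorem, by the longest-path argument: the endpoints of a longest
path have all their neighbours on it, so a pigeonhole count on positions yields two crossing edges
closing the path into a cycle; any two vertices have a common neighbour, so some vertex off a
non-spanning cycle is adjacent to it, which would give a longer path.
-/

namespace SimpleGraph

variable {α : Type*} (G : SimpleGraph α)

theorem exists_longest_isChain_nodup [Finite α] :
    ∃ l : List α, l.IsChain G.Adj ∧ l.Nodup ∧
      ∀ l' : List α, l'.IsChain G.Adj → l'.Nodup → l'.length ≤ l.length := by
  have := Fintype.ofFinite α
  let lengths : Set ℕ := {n | ∃ l : List α, l.IsChain G.Adj ∧ l.Nodup ∧ l.length = n}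
  have hbdd : BddAbove lengths := ⟨Fintype.card α, by
    rintro _ ⟨l, -, hnd, rfl⟩
    exact hnd.length_le_card⟩
  obtain ⟨l, hl, hnd, hlen⟩ : sSup lengths ∈ lengths :=
    Nat.sSup_mem ⟨0, [], List.isChain_nil, List.nodup_nil, rfl⟩ hbdd
  exact ⟨l, hl, hnd, fun l' hl' hnd' => hlen ▸ le_csSup hbdd ⟨l', hl', hnd', rfl⟩⟩

variable {G}

theorem mem_of_adj_head_of_longest {l : List α} (hl : l.IsChain G.Adj) (hnd : l.Nodup)
    (hmax : ∀ l' : List α, l'.IsChain G.Adj → l'.Nodup → l'.length ≤ l.length)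
    (hne : l ≠ []) {u : α} (hu : G.Adj (l.head hne) u) : u ∈ l := by
  by_contra hul
  have hext : (u :: l).IsChain G.Adj := by
    obtain ⟨a, l, rfl⟩ := List.exists_cons_of_ne_nil hne
    exact List.isChain_cons_cons.mpr ⟨hu.symm, hl⟩
  have := hmax _ hext (List.nodup_cons.mpr ⟨hul, hnd⟩)
  simp at this

theorem exists_adj_of_forall_exists_common {s : Set α}
    (hcommon : ∀ v w, ∃ z, G.Adj v z ∧ G.Adj w z) {v w : α} (hv : v ∈ s) (hw : w ∉ s) :
    ∃ u ∈ s, ∃ x ∉ s, G.Adj x u := by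
  obtain ⟨z, hvz, hwz⟩ := hcommon v w
  by_cases hz : z ∈ s
  · exact ⟨z, hz, w, hw, hwz⟩
  · exact ⟨v, hv, z, hz, hvz.symm⟩

theorem exists_common_adj_of_card_lt [Fintype α] [DecidableEq α] [DecidableRel G.Adj] (v w : α)
    (h : Fintype.card α < G.degree v + G.degree w) : ∃ z, G.Adj v z ∧ G.Adj w z := by
  obtain ⟨z, hz⟩ := Finset.inter_nonempty_of_card_lt_card_add_card
    (Finset.subset_univ _) (Finset.subset_univ _) h
  simp only [Finset.mem_inter, mem_neighborFinset] at hz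
  exact ⟨z, hz⟩

theorem cycleChain_append_reverse {p q : List α} (hp : p.IsChain G.Adj) (hq : q.IsChain G.Adj)
    (hp₀ : p ≠ []) (hq₀ : q ≠ []) (hhead : G.Adj (p.head hp₀) (q.head hq₀))
    (hlast : G.Adj (p.getLast hp₀) (q.getLast hq₀)) :
    Cycle.Chain G.Adj (p ++ q.reverse : List α) := by
  obtain ⟨a, p, rfl⟩ := List.exists_cons_of_ne_nil hp₀
  obtain ⟨b, q, rfl⟩ := List.exists_cons_of_ne_nil hq₀
  rw [List.cons_append, Cycle.chain_coe_cons,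
    show a :: (p ++ (b :: q).reverse ++ [a]) = (a :: p) ++ (a :: b :: q).reverse by simp]
  refine List.isChain_append.mpr ⟨hp, ?_, ?_⟩
  · rw [List.isChain_reverse]
    exact List.isChain_cons_cons.mpr ⟨hhead.symm, hq.imp fun _ _ h => h.symm⟩
  · intro x hx y hy
    rw [List.getLast?_eq_some_getLast (List.cons_ne_nil a p), Option.mem_some_iff] at hx
    rw [List.head?_reverse, List.getLast?_cons_cons,
      List.getLast?_eq_some_getLast (List.cons_ne_nil b q), Option.mem_some_iff] at hy
    exact hx ▸ hy ▸ hlast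

theorem exists_crossing_index [Fintype α] [DecidableEq α] [DecidableRel G.Adj] {l : List α}
    (hne : l ≠ []) (h₀ : ∀ u, G.Adj (l.head hne) u → u ∈ l)
    (hₖ : ∀ u, G.Adj (l.getLast hne) u → u ∈ l)
    (hdeg : l.length ≤ G.degree (l.head hne) + G.degree (l.getLast hne)) :
    ∃ j, ∃ hj : j < l.length, ∃ hj₀ : 0 < j,
      G.Adj (l.head hne) l[j] ∧ G.Adj (l.getLast hne) l[j - 1] := by
  -- A neighbour of the head is recorded at its position, a neighbour of the last vertex at the
  -- position after its own; both land in `[1, length - 1]`, so some position is hit twice.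
  have hidx {u : α} (hu : u ∈ l) : l[l.idxOf u]'(List.idxOf_lt_length_iff.mpr hu) = u :=
    List.getElem_idxOf _
  have hA : (G.neighborFinset (l.head hne)).image l.idxOf ⊆ Finset.Icc 1 (l.length - 1) := by
    simp only [Finset.image_subset_iff, mem_neighborFinset, Finset.mem_Icc]
    intro u hu
    have hul := h₀ u hu
    have hlt := List.idxOf_lt_length_iff.mpr hul
    refine ⟨Nat.one_le_iff_ne_zero.mpr fun h0 => hu.ne ?_, by omega⟩
    rw [← hidx hul]
    simp [h0, List.head_eq_getElem]
  have hB : (G.neighborFinset (l.getLast hne)).image (l.idxOf · + 1) ⊆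
      Finset.Icc 1 (l.length - 1) := by
    simp only [Finset.image_subset_iff, mem_neighborFinset, Finset.mem_Icc]
    intro u hu
    have hul := hₖ u hu
    have hlt := List.idxOf_lt_length_iff.mpr hul
    refine ⟨by omega, Nat.lt_iff_add_one_le.mp (lt_of_le_of_ne (by omega) fun h => hu.ne ?_)⟩
    rw [← hidx hul]
    simp [h, List.getLast_eq_getElem]
  have hcard : (Finset.Icc 1 (l.length - 1)).card <
      ((G.neighborFinset (l.head hne)).image l.idxOf).card +
        ((G.neighborFinset (l.getLast hne)).image (l.idxOf · + 1)).card := by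
    rw [Finset.card_image_of_injOn, Finset.card_image_of_injOn, card_neighborFinset_eq_degree,
      card_neighborFinset_eq_degree, Nat.card_Icc]
    · have := List.length_pos_iff.mpr hne
      omega
    · intro x hx y _ hxy
      exact (List.idxOf_inj (hₖ x (by simpa using hx))).mp (by simpa using hxy)
    · intro x hx y _ hxy
      exact (List.idxOf_inj (h₀ x (by simpa using hx))).mp hxy
  obtain ⟨j, hj⟩ := Finset.inter_nonempty_of_card_lt_card_add_card hA hB hcard
  simp only [Finset.mem_inter, Finset.mem_image, mem_neighborFinset] at hj
  obtain ⟨hjA, hjB⟩ := hj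
  obtain ⟨u₁, hu₁, rfl⟩ := hjA
  obtain ⟨u₂, hu₂, hj⟩ := hjB
  refine ⟨l.idxOf u₁, List.idxOf_lt_length_iff.mpr (h₀ u₁ hu₁), by omega, ?_, ?_⟩
  · rwa [hidx (h₀ u₁ hu₁)]
  · simpa [← hj, hidx (hₖ u₂ hu₂)] using hu₂

theorem exists_perm_cycleChain [Fintype α] [DecidableEq α] [DecidableRel G.Adj] {l : List α}
    (hl : l.IsChain G.Adj) (hne : l ≠ []) (h₀ : ∀ u, G.Adj (l.head hne) u → u ∈ l)
    (hₖ : ∀ u, G.Adj (l.getLast hne) u → u ∈ l)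
    (hdeg : l.length ≤ G.degree (l.head hne) + G.degree (l.getLast hne)) :
    ∃ c : List α, c.Perm l ∧ Cycle.Chain G.Adj (c : Cycle α) := by
  obtain ⟨j, hj, hj₀, hhead, hlast⟩ := exists_crossing_index hne h₀ hₖ hdeg
  have htake : l.take j ≠ [] := by simp [hne]; omega
  have hdrop : l.drop j ≠ [] := by simpa using hj
  refine ⟨l.take j ++ (l.drop j).reverse, ?_, cycleChain_append_reverse (hl.take j) (hl.drop j)
    htake hdrop ?_ ?_⟩
  · simpa only [List.take_append_drop] using (List.reverse_perm (l.drop j)).append_left (l.take j)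
  · simpa [List.head_take, List.head_drop] using hhead
  · have hj₁ : j - 1 < l.length := by omega
    simpa [List.getLast_take, List.getLast_drop, List.getElem?_eq_getElem hj₁] using hlast.symm

theorem exists_longer_isChain_of_cycleChain {c : List α} (hc : Cycle.Chain G.Adj (c : Cycle α))
    (hnd : c.Nodup) {u w : α} (hu : u ∈ c) (hw : w ∉ c) (hwu : G.Adj w u) :
    ∃ l : List α, l.IsChain G.Adj ∧ l.Nodup ∧ l.length = c.length + 1 := by
  obtain ⟨x, y, rfl⟩ := List.append_of_mem hu
  have hrot : (x ++ u :: y).IsRotated (u :: (y ++ x)) := by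
    simpa using List.isRotated_append (l := x) (l' := u :: y)
  rw [Cycle.coe_eq_coe.mpr hrot, Cycle.chain_coe_cons, ← List.cons_append] at hc
  refine ⟨w :: u :: (y ++ x), List.isChain_cons_cons.mpr ⟨hwu, (List.isChain_append.mp hc).1⟩,
    List.nodup_cons.mpr ⟨fun h => hw (hrot.perm.mem_iff.mpr h), hrot.perm.nodup_iff.mp hnd⟩, ?_⟩
  simp only [List.length_cons, List.length_append]
  omega

theorem isHamiltonian_of_cycleChain [Fintype α] [DecidableEq α] {c : List α}
    (hc : Cycle.Chain G.Adj (c : Cycle α)) (hnd : c.Nodup) (hall : ∀ x, x ∈ c)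
    (h3 : 3 ≤ c.length) : G.IsHamiltonian := by
  intro _
  obtain ⟨a, l, rfl⟩ := List.exists_cons_of_ne_nil (List.ne_nil_of_length_pos (l := c) (by omega))
  rw [Cycle.chain_coe_cons] at hc
  obtain ⟨p, hsupp⟩ : ∃ p : G.Walk a a, p.support = a :: (l ++ [a]) :=
    ⟨(Walk.ofSupport _ (List.cons_ne_nil _ _) hc).copy List.head_cons (by simp),
      by rw [Walk.support_copy, Walk.support_ofSupport]⟩
  have hlen : p.length = l.length + 1 := by
    simpa [hsupp] using p.length_support.symm
  have htail : p.support.tail.Perm (a :: l) := by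
    simp [hsupp]
  have hcount : ∀ x, p.support.tail.count x = 1 := fun x => by
    rw [htail.count_eq]
    exact List.count_eq_one_of_mem hnd (hall x)
  refine ⟨a, p, Walk.isHamiltonianCycle_iff_isCycle_and_support_count_tail_eq_one.mpr ⟨?_, hcount⟩⟩
  have hnil : ¬p.Nil := by simp [← Walk.length_eq_zero_iff, hlen]
  refine Walk.isCycle_iff_isPath_tail_and_le_length.mpr ⟨Walk.IsPath.mk' ?_, ?_⟩
  · rw [Walk.support_tail_of_not_nil _ hnil]
    exact htail.nodup_iff.mpr hnd
  · simp only [List.length_cons] at h3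
    omega

theorem isHamiltonian_of_card_lt_two_mul_degree [Fintype α] [DecidableEq α] [DecidableRel G.Adj]
    [Nonempty α] (hdeg : ∀ v, Fintype.card α < 2 * G.degree v) : G.IsHamiltonian := by
  obtain ⟨l, hl, hnd, hmax⟩ := G.exists_longest_isChain_nodup
  have hne : l ≠ [] := by
    rintro rfl
    simpa using hmax [Classical.arbitrary α] (List.isChain_singleton _) (List.nodup_singleton _)
  have hl' : l.reverse.IsChain G.Adj := List.isChain_reverse.mpr (hl.imp fun _ _ h => h.symm)
  have hmax' : ∀ l' : List α, l'.IsChain G.Adj → l'.Nodup → l'.length ≤ l.reverse.length := by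
    simpa using hmax
  have hₖ : ∀ u, G.Adj (l.getLast hne) u → u ∈ l := fun u hu => by
    simpa using mem_of_adj_head_of_longest hl' (List.nodup_reverse.mpr hnd) hmax'
      (by simpa using hne) (by simpa using hu)
  obtain ⟨c, hcl, hc⟩ := exists_perm_cycleChain hl hne
    (fun u => mem_of_adj_head_of_longest hl hnd hmax hne) hₖ
    (by have := hdeg (l.head hne); have := hdeg (l.getLast hne); have := hnd.length_le_card; omega)
  have hall : ∀ x, x ∈ c := by
    by_contra! ⟨w, hw⟩
    obtain ⟨u, hu, x, hx, hxu⟩ := exists_adj_of_forall_exists_common (s := {x | x ∈ c})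
      (fun v w => exists_common_adj_of_card_lt (G := G) v w
        (by have := hdeg v; have := hdeg w; omega))
      (hcl.mem_iff.mpr (List.head_mem hne)) hw
    obtain ⟨l', hl', hnd', hlen'⟩ :=
      exists_longer_isChain_of_cycleChain hc (hcl.nodup_iff.mpr hnd) hu hx hxu
    have := hmax l' hl' hnd'
    have := hcl.length_eq
    omega
  have hcard : c.length = Fintype.card α := by
    rw [← List.toFinset_card_of_nodup (hcl.nodup_iff.mpr hnd), ← Finset.card_univ]
    congr
    exact Finset.eq_univ_of_forall fun x => List.mem_toFinset.mpr (hall x)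
  refine isHamiltonian_of_cycleChain hc (hcl.nodup_iff.mpr hnd) hall ?_
  have := hdeg (Classical.arbitrary α)
  have := G.degree_lt_card_verts (Classical.arbitrary α)
  omega

end SimpleGraph

theorem AddSubgroup.card_le_two_mul_ncard_compl {G : Type*} [AddGroup G] [Finite G]
    {H : AddSubgroup G} (hH : H ≠ ⊤) : Nat.card G ≤ 2 * ((H : Set G)ᶜ).ncard := by
  have hidx := AddSubgroup.one_lt_index_of_ne_top hH
  have hmul := H.card_mul_index
  have hcompl := Set.ncard_add_ncard_compl (H : Set G)
  rw [← Nat.card_coe_set_eq, SetLike.coe_sort_coe] at hcompl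
  nlinarith

theorem ncGraph_image_neighborSet {L : Type*} [LieRing L] (v : {x : L // ∃ y : L, ⁅x, y⁆ ≠ 0}) :
    Subtype.val '' (ncGraph L).neighborSet v = {x : L | ⁅(v : L), x⁆ ≠ 0} := by
  ext x
  refine ⟨fun ⟨w, hw, hwx⟩ => hwx ▸ hw, fun hx => ⟨⟨x, v, ?_⟩, hx, rfl⟩⟩
  rwa [← lie_skew, neg_ne_zero]

theorem card_lt_two_mul_ncard_neighborSet_ncGraph {L : Type*} [LieRing L] [Finite L]
    (v : {x : L // ∃ y : L, ⁅x, y⁆ ≠ 0}) :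
    Nat.card {x : L // ∃ y : L, ⁅x, y⁆ ≠ 0} < 2 * ((ncGraph L).neighborSet v).ncard := by
  let centralizer : AddSubgroup L := (AddMonoidHom.mk' (fun x => ⁅(v : L), x⁆) (lie_add _)).ker
  have hne : centralizer ≠ ⊤ := fun h => by
    obtain ⟨y, hy⟩ := v.2
    exact hy (AddMonoidHom.mem_ker.mp (h ▸ AddSubgroup.mem_top y))
  have hdeg : ((ncGraph L).neighborSet v).ncard = ((centralizer : Set L)ᶜ).ncard := by
    rw [← Set.ncard_image_of_injective _ Subtype.val_injective, ncGraph_image_neighborSet]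
    rfl
  have hzero : Nat.card {x : L // ∃ y : L, ⁅x, y⁆ ≠ 0} < Nat.card L :=
    Finite.card_subtype_lt (x := 0) (by simp)
  have := AddSubgroup.card_le_two_mul_ncard_compl hne
  omega

open scoped Classical in
theorem stmt_8_general (L : Type*) [LieRing L]
    [Fintype L] (hna : ∃ a b : L, ⁅a, b⁆ ≠ 0) :
    (∀ v, Nat.card {x : L // ∃ y : L, ⁅x, y⁆ ≠ 0}
        < 2 * ((ncGraph L).neighborSet v).ncard) ∧
    (ncGraph L).IsHamiltonian := by
  refine ⟨card_lt_two_mul_ncard_neighborSet_ncGraph, ?_⟩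
  obtain ⟨a, b, hab⟩ := hna
  have : Nonempty {x : L // ∃ y : L, ⁅x, y⁆ ≠ 0} := ⟨⟨a, b, hab⟩⟩
  refine SimpleGraph.isHamiltonian_of_card_lt_two_mul_degree fun v => ?_
  rw [← Nat.card_eq_fintype_card, ← SimpleGraph.card_neighborSet_eq_degree,
    ← Nat.card_eq_fintype_card, Nat.card_coe_set_eq]
  exact card_lt_two_mul_ncard_neighborSet_ncGraph v

open scoped Classical in
/-- Every vertex `v` of the non-commuting graph of a finite non-abelian Lie
algebra satisfies `deg v > |V|/2`; hence (by Dirac's theorem) the graph is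
Hamiltonian. -/
theorem stmt_8 (K L : Type*) [Field K] [Fintype K] [LieRing L] [LieAlgebra K L]
    [Fintype L] (hna : ∃ a b : L, ⁅a, b⁆ ≠ 0) :
    (∀ v, Nat.card {x : L // ∃ y : L, ⁅x, y⁆ ≠ 0}
        < 2 * ((ncGraph L).neighborSet v).ncard) ∧
    (ncGraph L).IsHamiltonian :=
  stmt_8_general L hna
end

section
/- The non-commuting graph of a finite non-abelian Lie algebra is never complete bipartite: its vertex set cannot be partitioned into two nonempty parts with edges exactly between the parts. -/
section

variable {L : Type*} [LieRing L]

theorem lie_add_self_left (a b : L) : ⁅a + b, a⁆ = ⁅b, a⁆ := by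
  rw [add_lie, lie_self, zero_add]

theorem lie_add_self_right (a b : L) : ⁅a + b, b⁆ = ⁅a, b⁆ := by
  rw [add_lie, lie_self, add_zero]

theorem lie_ne_zero_swap {a b : L} (h : ⁅a, b⁆ ≠ 0) : ⁅b, a⁆ ≠ 0 := by
  rwa [← lie_skew, neg_ne_zero] at h

theorem add_notMem_lieCenter {a b : L} (h : ⁅b, a⁆ ≠ 0) : a + b ∉ lieCenter L :=
  fun hc => h (lie_add_self_left a b ▸ hc a)

end

theorem stmt_11_general (L : Type*) [LieRing L] :
    ¬ ∃ A B : Set L, A.Nonempty ∧ B.Nonempty ∧ Disjoint A B ∧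
        A ∪ B = (lieCenter L)ᶜ ∧
        (∀ a ∈ A, ∀ b ∈ B, ⁅a, b⁆ ≠ 0) ∧
        (∀ a ∈ A, ∀ a' ∈ A, ⁅a, a'⁆ = 0) ∧
        (∀ b ∈ B, ∀ b' ∈ B, ⁅b, b'⁆ = 0) := by
  rintro ⟨A, B, ⟨a, ha⟩, ⟨b, hb⟩, -, hunion, hAB, hAA, hBB⟩
  have hab : ⁅a, b⁆ ≠ 0 := hAB a ha b hb
  have hba : ⁅b, a⁆ ≠ 0 := lie_ne_zero_swap hab
  have hmem : a + b ∈ A ∪ B := hunion ▸ add_notMem_lieCenter hba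
  rcases hmem with hA | hB
  · exact hba (lie_add_self_left a b ▸ hAA _ hA a ha)
  · exact hab (lie_add_self_right a b ▸ hBB _ hB b hb)

/-- The non-commuting graph of a finite non-abelian Lie algebra is never
complete bipartite: its vertex set cannot be partitioned into two nonempty
parts with edges exactly between the parts. -/
theorem stmt_11 (K L : Type*) [Field K] [Fintype K] [LieRing L] [LieAlgebra K L]
    [Fintype L] (hna : ∃ a b : L, ⁅a, b⁆ ≠ 0) :
    ¬ ∃ A B : Set L, A.Nonempty ∧ B.Nonempty ∧ Disjoint A B ∧
        A ∪ B = (lieCenter L)ᶜ ∧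
        (∀ a ∈ A, ∀ b ∈ B, ⁅a, b⁆ ≠ 0) ∧
        (∀ a ∈ A, ∀ a' ∈ A, ⁅a, a'⁆ = 0) ∧
        (∀ b ∈ B, ∀ b' ∈ B, ⁅b, b'⁆ = 0) :=
  stmt_11_general L
end

section
/- If the non-commuting graph of a finite non-abelian Lie algebra L over F_q has domination number 1 (some vertex adjacent to all other vertices), then |Z(L)| = 1 and q = 2. -/
/-!
Let `x` be a dominating vertex. Everything in `x + Z(L)` and in `K^× • x` commutes with `x` and
lies outside the center, so adjacency forces it to equal `x`. Hence `Z(L) = {0}`, and `c • x = x`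
for every `c ≠ 0`, i.e. `K = {0, 1}`.
-/

section LieRing

variable {L : Type*} [LieRing L]

theorem mem_lieCenter_of_add_mem {x z : L} (hz : z ∈ lieCenter L) (hxz : x + z ∈ lieCenter L) :
    x ∈ lieCenter L := fun y => by
  simpa only [add_lie, hz y, add_zero] using hxz y

theorem lieCenter_eq_singleton_zero_of_dominating {x : L} (hx : x ∉ lieCenter L)
    (hdom : ∀ y ∈ (lieCenter L)ᶜ, y ≠ x → ⁅x, y⁆ ≠ 0) : lieCenter L = {0} := by
  refine Set.eq_singleton_iff_unique_mem.mpr ⟨zero_mem_lieCenter, fun z hz => ?_⟩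
  have hcomm : ⁅x, x + z⁆ = 0 := by
    rw [lie_add, lie_self, zero_add, ← lie_skew, hz x, neg_zero]
  by_contra hz0
  exact hdom (x + z) (fun h => hx (mem_lieCenter_of_add_mem hz h))
    (fun h => hz0 (add_eq_left.mp h)) hcomm

end LieRing

section LieAlgebra

variable {K L : Type*} [Field K] [LieRing L] [LieAlgebra K L]

theorem eq_zero_or_eq_one_of_dominating {x : L} (hx : x ∉ lieCenter L)
    (hdom : ∀ y ∈ (lieCenter L)ᶜ, y ≠ x → ⁅x, y⁆ ≠ 0) (c : K) : c = 0 ∨ c = 1 := by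
  by_contra! hc
  obtain ⟨hc0, hc1⟩ := hc
  have hx0 : x ≠ 0 := fun h => hx (h ▸ zero_mem_lieCenter)
  have hne : c • x ≠ x := fun h => by
    have : (c - 1) • x = 0 := by rw [sub_smul, one_smul, h, sub_self]
    exact (smul_eq_zero.mp this).elim (fun h' => hc1 (sub_eq_zero.mp h')) hx0
  exact hdom (c • x) (fun h => hx ((smul_mem_lieCenter_iff hc0).mp h)) hne
    (by rw [lie_smul, lie_self, smul_zero])

end LieAlgebra

theorem stmt_12_general (K L : Type*) [Field K] [Fintype K] [LieRing L] [LieAlgebra K L]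
    (hdom : ∃ x ∈ (lieCenter L)ᶜ, ∀ y ∈ (lieCenter L)ᶜ, y ≠ x → ⁅x, y⁆ ≠ 0) :
    (lieCenter L).ncard = 1 ∧ Fintype.card K = 2 := by
  obtain ⟨x, hx, hxdom⟩ := hdom
  refine ⟨?_, Fintype.card_eq_two_of_forall_eq_zero_or_eq_one
    (eq_zero_or_eq_one_of_dominating (K := K) hx hxdom)⟩
  rw [lieCenter_eq_singleton_zero_of_dominating hx hxdom, Set.ncard_singleton]

/-- If the non-commuting graph of a finite non-abelian Lie algebra `L` over `F_q`
has domination number 1 (some vertex adjacent to all other vertices), then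
`|Z(L)| = 1` and `q = 2`. -/
theorem stmt_12 (K L : Type*) [Field K] [Fintype K] [LieRing L] [LieAlgebra K L]
    [Fintype L] (hna : ∃ a b : L, ⁅a, b⁆ ≠ 0)
    (hdom : ∃ x ∈ (lieCenter L)ᶜ, ∀ y ∈ (lieCenter L)ᶜ, y ≠ x → ⁅x, y⁆ ≠ 0) :
    (lieCenter L).ncard = 1 ∧ Fintype.card K = 2 :=
  stmt_12_general K L hdom
end

section
/- If L₁ and L₂ are finite non-abelian Lie algebras over F_2 with isomorphic non-commuting graphs, then |L₁| = |L₂| and |Z(L₁)| = |Z(L₂)|. -/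
theorem Nat.log_pow_sub_pow {q m n : ℕ} (hq : 1 < q) (hmn : m < n) :
    Nat.log q (q ^ n - q ^ m) = n - 1 := by
  obtain ⟨k, rfl⟩ := Nat.exists_eq_add_of_lt hmn
  have hm : q ^ m ≤ q ^ (m + k) := Nat.pow_le_pow_right (by omega) (by omega)
  have hq' : q ^ (m + k) * 2 ≤ q ^ (m + k + 1) := by
    rw [pow_succ]; exact Nat.mul_le_mul_left _ hq
  have hpos : 0 < q ^ m := Nat.pow_pos (by omega)
  rw [Nat.add_sub_cancel]
  exact Nat.log_eq_of_pow_le_of_lt_pow (by omega) (by omega)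

theorem Nat.pow_sub_pow_injective {q m n m' n' : ℕ} (hq : 1 < q) (hmn : m < n) (hmn' : m' < n')
    (h : q ^ n - q ^ m = q ^ n' - q ^ m') : n = n' ∧ m = m' := by
  have hn : n = n' := by
    have := congrArg (Nat.log q) h
    rw [Nat.log_pow_sub_pow hq hmn, Nat.log_pow_sub_pow hq hmn'] at this
    omega
  subst hn
  have hm : q ^ m ≤ q ^ n := Nat.pow_le_pow_right (by omega) hmn.le
  have hm' : q ^ m' ≤ q ^ n := Nat.pow_le_pow_right (by omega) hmn'.le
  exact ⟨rfl, Nat.pow_right_injective hq (show q ^ m = q ^ m' by omega)⟩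

section
variable {K L : Type*} [Field K] [LieRing L] [LieAlgebra K L]

theorem coe_center_eq_lieCenter : (LieAlgebra.center K L : Set L) = lieCenter L := by
  ext z
  simp only [SetLike.mem_coe, LieModule.mem_maxTrivSubmodule, lieCenter, Set.mem_ofPred_eq]
  exact forall_congr' fun y => by rw [← lie_skew, neg_eq_zero]

theorem compl_lieCenter : (lieCenter L)ᶜ = {x : L | ∃ y : L, ⁅x, y⁆ ≠ 0} := by
  ext x
  simp [lieCenter]

theorem center_ne_top_of_exists_lie_ne_zero (h : ∃ a b : L, ⁅a, b⁆ ≠ 0) :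
    LieAlgebra.center K L ≠ ⊤ := by
  obtain ⟨a, b, hab⟩ := h
  intro htop
  have : a ∈ lieCenter L := by rw [← coe_center_eq_lieCenter (K := K), htop]; trivial
  exact hab (this b)

variable [Finite L]

theorem finrank_center_lt (h : ∃ a b : L, ⁅a, b⁆ ≠ 0) :
    Module.finrank K (LieAlgebra.center K L) < Module.finrank K L :=
  Submodule.finrank_lt <| (LieSubmodule.toSubmodule_eq_top _).not.2 <|
    center_ne_top_of_exists_lie_ne_zero h

theorem ncard_lieCenter :
    (lieCenter L).ncard = Nat.card K ^ Module.finrank K (LieAlgebra.center K L) := by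
  rw [← coe_center_eq_lieCenter (K := K), ← Nat.card_coe_set_eq]
  exact Module.natCard_eq_pow_finrank

theorem card_noncentral_eq_pow_sub_pow :
    Nat.card {x : L // ∃ y : L, ⁅x, y⁆ ≠ 0} =
      Nat.card K ^ Module.finrank K L - Nat.card K ^ Module.finrank K (LieAlgebra.center K L) := by
  rw [← ncard_lieCenter, ← Module.natCard_eq_pow_finrank (K := K), ← Set.ncard_compl,
    compl_lieCenter, ← Nat.card_coe_set_eq]
  rfl
end

theorem card_eq_and_ncard_lieCenter_eq_of_card_noncentral_eq {K L₁ L₂ : Type*}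
    [Field K] [Finite K] [LieRing L₁] [LieAlgebra K L₁] [Finite L₁]
    [LieRing L₂] [LieAlgebra K L₂] [Finite L₂]
    (h₁ : ∃ a b : L₁, ⁅a, b⁆ ≠ 0) (h₂ : ∃ a b : L₂, ⁅a, b⁆ ≠ 0)
    (hcard : Nat.card {x : L₁ // ∃ y : L₁, ⁅x, y⁆ ≠ 0} =
      Nat.card {x : L₂ // ∃ y : L₂, ⁅x, y⁆ ≠ 0}) :
    Nat.card L₁ = Nat.card L₂ ∧ (lieCenter L₁).ncard = (lieCenter L₂).ncard := by
  rw [card_noncentral_eq_pow_sub_pow (K := K), card_noncentral_eq_pow_sub_pow (K := K)]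
    at hcard
  obtain ⟨hn, hm⟩ := Nat.pow_sub_pow_injective Finite.one_lt_card
    (finrank_center_lt h₁) (finrank_center_lt h₂) hcard
  rw [Module.natCard_eq_pow_finrank (K := K) (V := L₁),
    Module.natCard_eq_pow_finrank (K := K) (V := L₂), ncard_lieCenter (K := K),
    ncard_lieCenter (K := K), hn, hm]
  exact ⟨rfl, rfl⟩

theorem stmt_19_general (L₁ L₂ : Type*)
    [LieRing L₁] [LieAlgebra (ZMod 2) L₁] [Fintype L₁]
    [LieRing L₂] [LieAlgebra (ZMod 2) L₂] [Fintype L₂]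
    (hna₁ : ∃ a b : L₁, ⁅a, b⁆ ≠ 0) (hna₂ : ∃ a b : L₂, ⁅a, b⁆ ≠ 0)
    (e : {x : L₁ // ∃ y : L₁, ⁅x, y⁆ ≠ 0} ≃ {x : L₂ // ∃ y : L₂, ⁅x, y⁆ ≠ 0}) :
    Nat.card L₁ = Nat.card L₂ ∧ (lieCenter L₁).ncard = (lieCenter L₂).ncard :=
  card_eq_and_ncard_lieCenter_eq_of_card_noncentral_eq (K := ZMod 2) hna₁ hna₂ (Nat.card_congr e)

/-- If `L₁` and `L₂` are finite non-abelian Lie algebras over `F_2` with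
isomorphic non-commuting graphs (a bijection between the sets of non-central
elements preserving adjacency), then `|L₁| = |L₂|` and `|Z(L₁)| = |Z(L₂)|`. -/
theorem stmt_19 (L₁ L₂ : Type*)
    [LieRing L₁] [LieAlgebra (ZMod 2) L₁] [Fintype L₁]
    [LieRing L₂] [LieAlgebra (ZMod 2) L₂] [Fintype L₂]
    (hna₁ : ∃ a b : L₁, ⁅a, b⁆ ≠ 0) (hna₂ : ∃ a b : L₂, ⁅a, b⁆ ≠ 0)
    (e : {x : L₁ // ∃ y : L₁, ⁅x, y⁆ ≠ 0} ≃ {x : L₂ // ∃ y : L₂, ⁅x, y⁆ ≠ 0})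
    (he : ∀ a b : {x : L₁ // ∃ y : L₁, ⁅x, y⁆ ≠ 0},
      ⁅(a : L₁), (b : L₁)⁆ ≠ 0 ↔ ⁅(e a : L₂), (e b : L₂)⁆ ≠ 0) :
    Nat.card L₁ = Nat.card L₂ ∧ (lieCenter L₁).ncard = (lieCenter L₂).ncard :=
  stmt_19_general L₁ L₂ hna₁ hna₂ e
end
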